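/- arXiv:2505.12596 — 2 statements merged into one kernel-verified Lean document; each statement's English description precedes it below -/
import Mathlib

section
/- Let ν₁ = e^{iψ}, ν₂ = e^{-iψ} with ψ ∈ (0,π), ψ ∉ {π/2, 2π/3}. Suppose the cubic resonance coefficients satisfy z̃^{(20)} = ν₁, z̃^{(02)} = ν₁, z̃^{(11)} = -2ν₁, and z̃^{(21)} = 0. Then the Lyapunov coefficient formula LC = Re( -z̃^{(21)} ν̄₁ + |z̃^{(02)}|² (-4 + 2ν̄₁³)/(-2 + ν₁³ + ν̄₁³) + |z̃^{(11)}|² (-2ν̄₁ + ν̄₁²)/(-1 + ν̄₁)² + z̃^{(11)} z̃^{(20)} (2 - 6ν̄₁ + ν̄₁²)/(-1 + ν₁)² ) evaluates to LC = 4 cos ψ (1 + cos ψ)/((-1 + cos ψ)(1 + 2 cos ψ)²). -/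
/-!
On the unit circle `conj ν = ν⁻¹`, and `Re z = (z + conj z) / 2`, so the real part of the
Lyapunov coefficient is a rational function of `ν` alone; the target is one as well through
`cos ψ = (ν + ν⁻¹) / 2`. All denominators factor through `ν`, `ν - 1` and `ν² + ν + 1`, which are
nonzero as long as `ν³ ≠ 1`, and the identity is then checked by clearing denominators.
-/

open Complex Real ComplexConjugate

noncomputable def lyapunovCoeff (ν z20 z02 z11 z21 : ℂ) : ℝ :=
  (-z21 * conj ν
      + z02 * conj z02 * (-4 + 2 * (conj ν) ^ 3) / (-2 + ν ^ 3 + (conj ν) ^ 3)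
      + z11 * conj z11 * (-2 * conj ν + (conj ν) ^ 2) / (-1 + conj ν) ^ 2
      + z11 * z20 * (2 - 6 * conj ν + (conj ν) ^ 2) / (-1 + ν) ^ 2).re

theorem lyapunovCoeff_resonant {ν : ℂ} (hν : ‖ν‖ = 1) (hν3 : ν ^ 3 ≠ 1) :
    lyapunovCoeff ν ν ν (-2 * ν) 0
      = 4 * ν.re * (1 + ν.re) / ((-1 + ν.re) * (1 + 2 * ν.re) ^ 2) := by
  have hconj : conj ν = ν⁻¹ := (inv_eq_conj hν).symm
  have h0 : ν ≠ 0 := by rintro rfl; simp at hν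
  have h1 : ν - 1 ≠ 0 := fun h ↦ hν3 (by rw [sub_eq_zero.mp h, one_pow])
  have hq : ν ^ 2 + ν + 1 ≠ 0 := fun h ↦ hν3 (by linear_combination (ν - 1) * h)
  have hd3 : -2 + ν ^ 3 + ν⁻¹ ^ 3 = ((ν - 1) * (ν ^ 2 + ν + 1)) ^ 2 / ν ^ 3 := by
    field_simp; ring
  have hd3' : -2 + ν⁻¹ ^ 3 + ν ^ 3 = ((ν - 1) * (ν ^ 2 + ν + 1)) ^ 2 / ν ^ 3 := by
    rw [← hd3]; ring
  have hd1 : -1 + ν⁻¹ = -(ν - 1) / ν := by field_simp; ring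
  have hre1 : -1 + (ν + ν⁻¹) / 2 = (ν - 1) ^ 2 / (2 * ν) := by field_simp; ring
  have hre2 : 1 + 2 * ((ν + ν⁻¹) / 2) = (ν ^ 2 + ν + 1) / ν := by field_simp; ring
  apply ofReal_injective
  rw [lyapunovCoeff, re_eq_add_conj]
  push_cast
  rw [re_eq_add_conj]
  simp only [map_add, map_sub, map_neg, map_mul, map_div₀, map_pow, map_ofNat, map_one, map_zero,
    map_inv₀, inv_inv, hconj]
  rw [hd3, hd3', hd1, hre1, hre2, neg_add_eq_sub (1 : ℂ) ν]
  -- hide `ν² + ν + 1` from `field_simp`, which would otherwise reshape it and lose `hq`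
  generalize hq' : ν ^ 2 + ν + 1 = q at hq ⊢
  field_simp
  subst hq'
  ring

theorem exp_ofReal_mul_I_pow_three_ne_one {ψ : ℝ} (hψ : ψ ∈ Set.Ioo 0 π)
    (h3 : ψ ≠ 2 * π / 3) : exp (ψ * I) ^ 3 ≠ 1 := by
  rw [← Complex.exp_nat_mul, Ne, Complex.exp_eq_one_iff]
  rintro ⟨n, hn⟩
  have h3ψ : 3 * ψ = n * (2 * π) := by simpa using congrArg im hn
  have hpos : (0 : ℝ) < n := by nlinarith [hψ.1, pi_pos]
  have hlt : (n : ℝ) < 2 := by nlinarith [hψ.2, pi_pos]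
  obtain rfl : n = 1 := by
    have : 0 < n ∧ n < 2 := ⟨by exact_mod_cast hpos, by exact_mod_cast hlt⟩
    omega
  exact h3 (by push_cast at h3ψ; linarith)

theorem stmt4_general (ψ : ℝ) (hψ : ψ ∈ Set.Ioo 0 π) (h3 : ψ ≠ 2 * π / 3)
    (ν : ℂ) (hν : ν = Complex.exp ((ψ : ℂ) * Complex.I))
    (z20 z02 z11 z21 : ℂ)
    (h20 : z20 = ν) (h02 : z02 = ν) (h11 : z11 = -2 * ν) (h21 : z21 = 0) :
    (-z21 * conj ν
      + z02 * conj z02 * (-4 + 2 * (conj ν) ^ 3) / (-2 + ν ^ 3 + (conj ν) ^ 3)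
      + z11 * conj z11 * (-2 * conj ν + (conj ν) ^ 2) / (-1 + conj ν) ^ 2
      + z11 * z20 * (2 - 6 * conj ν + (conj ν) ^ 2) / (-1 + ν) ^ 2).re
    = 4 * Real.cos ψ * (1 + Real.cos ψ)
        / ((-1 + Real.cos ψ) * (1 + 2 * Real.cos ψ) ^ 2) := by
  subst h20 h02 h11 h21 hν
  have h := lyapunovCoeff_resonant (norm_exp_ofReal_mul_I ψ)
    (exp_ofReal_mul_I_pow_three_ne_one hψ h3)
  rwa [exp_ofReal_mul_I_re] at h

/-- The Lyapunov coefficient formula evaluated at the resonance coefficients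
`z̃⁽²⁰⁾ = ν₁`, `z̃⁽⁰²⁾ = ν₁`, `z̃⁽¹¹⁾ = -2ν₁`, `z̃⁽²¹⁾ = 0` equals
`4 cos ψ (1 + cos ψ)/((-1 + cos ψ)(1 + 2 cos ψ)²)`. -/
theorem stmt4 (ψ : ℝ) (hψ : ψ ∈ Set.Ioo 0 π) (h2 : ψ ≠ π / 2) (h3 : ψ ≠ 2 * π / 3)
    (ν : ℂ) (hν : ν = Complex.exp ((ψ : ℂ) * Complex.I))
    (z20 z02 z11 z21 : ℂ)
    (h20 : z20 = ν) (h02 : z02 = ν) (h11 : z11 = -2 * ν) (h21 : z21 = 0) :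
    (-z21 * conj ν
      + z02 * conj z02 * (-4 + 2 * (conj ν) ^ 3) / (-2 + ν ^ 3 + (conj ν) ^ 3)
      + z11 * conj z11 * (-2 * conj ν + (conj ν) ^ 2) / (-1 + conj ν) ^ 2
      + z11 * z20 * (2 - 6 * conj ν + (conj ν) ^ 2) / (-1 + ν) ^ 2).re
    = 4 * Real.cos ψ * (1 + Real.cos ψ)
        / ((-1 + Real.cos ψ) * (1 + 2 * Real.cos ψ) ^ 2) :=
  stmt4_general ψ hψ h3 ν hν z20 z02 z11 z21 h20 h02 h11 h21
end

section
/- Let U ⊆ ℝⁿ be open and let G_k^{(j)}: U → ℝ and H_k^{(j)}: U × ℝᵐ → ℝ (for j = 1,…,m, k ≥ 1) be C^r functions such that sup |H_k^{(j)}| → 0 and sup |∂_{y_i} H_k^{(j)}| → 0 as k → ∞ for all i, j. Then there exists κ > 0 such that for all k > κ, the system y_j = G_k^{(j)}(x) + H_k^{(j)}(x, y₁,…,y_m), j = 1,…,m, admits C^r solutions y_j = G_k^{(j)}(x) + I_k^{(j)}(x) with |I_k^{(j)}(x)| ≤ C · sup_{(x,y)} |H_k^{(j)}(x,y)| for a constant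 C independent of k, x, j. -/
/-!
For large `k` every partial derivative `∂_{y_i} H_k^{(j)}` is at most `ε = 1/(m+1)`, so by the
mean value inequality `T_k x : y ↦ (G_k^{(j)}(x) + H_k^{(j)}(x, y))_j` is a contraction of `ℝᵐ`
(sup norm) with constant `m/(m+1)`. Its fixed point `W_k(x)` solves the system, and
`I_k^{(j)}(x) = W_k^{(j)}(x) - G_k^{(j)}(x) = H_k^{(j)}(x, W_k(x))` is bounded by `sup |H_k^{(j)}|`.
The fixed point is `C^r` in `x` by the implicit function theorem applied to `(x, w) ↦ w - T_k x w`: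
its partial derivative in `w` is `id - D_w T_k`, invertible by a Neumann series since
`‖D_w T_k‖` is bounded by the contraction constant, and uniqueness of the fixed point identifies
the implicit function with `W_k`.
-/

open Set Topology Function NNReal

section FixedPointDependence

variable {𝕜 E F : Type*} [RCLike 𝕜]
  [NormedAddCommGroup E] [NormedSpace 𝕜 E] [CompleteSpace E]
  [NormedAddCommGroup F] [NormedSpace 𝕜 F] [CompleteSpace F]

theorem ContinuousLinearMap.isInvertible_id_sub_of_norm_lt_one {A : F →L[𝕜] F} (hA : ‖A‖ < 1) :
    (ContinuousLinearMap.id 𝕜 F - A).IsInvertible :=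
  ⟨ContinuousLinearEquiv.unitsEquiv 𝕜 F (Units.oneSub A hA), rfl⟩

theorem contDiffOn_of_forall_isFixedPt_contractingWith {n : WithTop ℕ∞} (hn : n ≠ 0)
    {T : E → F → F} {w : E → F} {U : Set E} {K : ℝ≥0} (hU : IsOpen U)
    (hT : ContDiffOn 𝕜 n (uncurry T) (U ×ˢ univ))
    (hK : ∀ x ∈ U, ContractingWith K (T x)) (hw : ∀ x ∈ U, IsFixedPt (T x) (w x)) :
    ContDiffOn 𝕜 n w U := by
  intro x₀ hx₀
  refine ContDiffAt.contDiffWithinAt ?_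
  set u : E × F := (x₀, w x₀)
  have hTu : ContDiffAt 𝕜 n (uncurry T) u :=
    hT.contDiffAt ((hU.prod isOpen_univ).mem_nhds ⟨hx₀, trivial⟩)
  set f : E × F → F := fun p => p.2 - T p.1 p.2
  have hf : ContDiffAt 𝕜 n f u := contDiffAt_snd.sub hTu
  have hpartial : fderiv 𝕜 f u ∘L .inr 𝕜 E F = .id 𝕜 F - fderiv 𝕜 (T x₀) (w x₀) := by
    have hT₀ : DifferentiableAt 𝕜 (T x₀) (w x₀) :=
      (hTu.differentiableAt hn).comp (w x₀)
        ((differentiableAt_const x₀).prodMk differentiableAt_id)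
    exact ((hf.differentiableAt hn).hasFDerivAt.comp (w x₀)
      (hasFDerivAt_prodMk_right x₀ (w x₀))).unique ((hasFDerivAt_id _).sub hT₀.hasFDerivAt)
  have hinv : (fderiv 𝕜 f u ∘L .inr 𝕜 E F).IsInvertible := by
    rw [hpartial]
    refine ContinuousLinearMap.isInvertible_id_sub_of_norm_lt_one ?_
    exact (norm_fderiv_le_of_lipschitz 𝕜 (hK x₀ hx₀).2).trans_lt (hK x₀ hx₀).1
  have hw_eq : w =ᶠ[𝓝 x₀] hf.implicitFunction hn hinv := by
    filter_upwards [hf.eventually_apply_implicitFunction hn hinv, hU.mem_nhds hx₀] with x hfx hx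
    refine (hK x hx).fixedPoint_unique' (hw x hx) ?_
    have hfu : f u = 0 := sub_eq_zero.2 (hw x₀ hx₀).symm
    exact (sub_eq_zero.1 (hfx.trans hfu)).symm
  exact (hf.contDiffAt_implicitFunction hn hinv).congr_of_eventuallyEq hw_eq

end FixedPointDependence

theorem ContinuousLinearMap.opNorm_le_of_norm_apply_single_le {𝕜 ι M : Type*}
    [NontriviallyNormedField 𝕜] [Fintype ι] [DecidableEq ι] [SeminormedAddCommGroup M]
    [NormedSpace 𝕜 M] (L : (ι → 𝕜) →L[𝕜] M) {ε : ℝ} (hε : 0 ≤ ε)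
    (h : ∀ i, ‖L (Pi.single i 1)‖ ≤ ε) : ‖L‖ ≤ Fintype.card ι * ε := by
  refine L.opNorm_le_bound (by positivity) fun v => ?_
  calc ‖L v‖ = ‖∑ i, v i • L (Pi.single i 1)‖ := by
        conv_lhs => rw [← Finset.univ_sum_single v]
        simp only [map_sum]
        congr! 2 with i
        rw [← map_smul, ← Pi.single_smul', smul_eq_mul, mul_one]
    _ ≤ ∑ i, ‖v i‖ * ε := norm_sum_le_of_le _ fun i _ => by
        rw [norm_smul]; exact mul_le_mul_of_nonneg_left (h i) (norm_nonneg _)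
    _ ≤ ∑ _i : ι, ‖v‖ * ε := Finset.sum_le_sum fun i _ =>
        mul_le_mul_of_nonneg_right (norm_le_pi_norm v i) hε
    _ = Fintype.card ι * ε * ‖v‖ := by simp; ring

theorem lipschitzWith_of_norm_fderiv_single_le {𝕜 ι M : Type*} [RCLike 𝕜] [Fintype ι]
    [DecidableEq ι] [NormedAddCommGroup M] [NormedSpace 𝕜 M] {f : (ι → 𝕜) → M}
    (hf : Differentiable 𝕜 f) {ε : ℝ≥0} (h : ∀ y i, ‖fderiv 𝕜 f y (Pi.single i 1)‖ ≤ ε) :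
    LipschitzWith (Fintype.card ι * ε) f :=
  lipschitzWith_of_nnnorm_fderiv_le hf fun y => by
    simpa [← NNReal.coe_le_coe] using
      (fderiv 𝕜 f y).opNorm_le_of_norm_apply_single_le ε.coe_nonneg (h y)

theorem LipschitzWith.pi {α ι : Type*} {β : ι → Type*} [PseudoEMetricSpace α] [Fintype ι]
    [∀ i, PseudoEMetricSpace (β i)] {K : ℝ≥0} {f : α → ∀ i, β i}
    (hf : ∀ i, LipschitzWith K fun x => f x i) : LipschitzWith K f :=
  fun x y => edist_pi_le_iff.2 fun i => hf i x y

theorem contractingWith_of_norm_fderiv_single_le {𝕜 ι : Type*} [RCLike 𝕜] [Fintype ι]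
    [DecidableEq ι] {f : (ι → 𝕜) → ι → 𝕜} (hf : ∀ j, Differentiable 𝕜 (f · j)) {ε : ℝ≥0}
    (h : ∀ j y i, ‖fderiv 𝕜 (f · j) y (Pi.single i 1)‖ ≤ ε) (hε : Fintype.card ι * ε < 1) :
    ContractingWith (Fintype.card ι * ε) f :=
  ⟨hε, LipschitzWith.pi fun j => lipschitzWith_of_norm_fderiv_single_le (hf j) (h j)⟩

theorem stmt8_general (n m : ℕ) (r : ℕ∞) (hr : 1 ≤ r) (U : Set (Fin n → ℝ)) (hU : IsOpen U)
    (G : ℕ → Fin m → (Fin n → ℝ) → ℝ)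
    (H : ℕ → Fin m → (Fin n → ℝ) → (Fin m → ℝ) → ℝ)
    (hG : ∀ k j, ContDiffOn ℝ r (G k j) U)
    (hH : ∀ k j, ContDiff ℝ r (fun p : (Fin n → ℝ) × (Fin m → ℝ) => H k j p.1 p.2))
    (hHy : ∀ ε : ℝ, 0 < ε → ∃ K : ℕ, ∀ k ≥ K, ∀ j i : Fin m, ∀ x ∈ U,
      ∀ y : Fin m → ℝ, |fderiv ℝ (H k j x) y (Pi.single i 1)| ≤ ε) :
    ∃ κ : ℕ, ∃ C : ℝ, 0 < C ∧ ∃ I : ℕ → Fin m → (Fin n → ℝ) → ℝ,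
      ∀ k : ℕ, κ < k →
        (∀ j, ContDiffOn ℝ r (I k j) U) ∧
        (∀ x ∈ U, ∀ j : Fin m,
          G k j x + I k j x = G k j x + H k j x (fun j' => G k j' x + I k j' x)) ∧
        (∀ j : Fin m, ∀ M : ℝ,
          (∀ x ∈ U, ∀ y : Fin m → ℝ, |H k j x y| ≤ M) →
          ∀ x ∈ U, |I k j x| ≤ C * M) := by
  have hr0 : (r : WithTop ℕ∞) ≠ 0 := by exact_mod_cast (zero_lt_one.trans_le hr).ne'
  set ε : ℝ≥0 := (m + 1)⁻¹
  have hmε : Fintype.card (Fin m) * ε < 1 := by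
    simpa [ε, ← div_eq_mul_inv] using (div_lt_one (by positivity)).2 (lt_add_one (m : ℝ≥0))
  obtain ⟨κ, hκ⟩ := hHy ε (by positivity)
  set T : ℕ → (Fin n → ℝ) → (Fin m → ℝ) → Fin m → ℝ := fun k x w j => G k j x + H k j x w
  have hT_contracting : ∀ k ≥ κ, ∀ x ∈ U,
      ContractingWith (Fintype.card (Fin m) * ε) (T k x) := fun k hk x hx => by
    have hHx : ∀ j, ContDiff ℝ r (H k j x) := fun j =>
      (hH k j).comp (contDiff_const.prodMk contDiff_id)
    refine contractingWith_of_norm_fderiv_single_le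
      (fun j => ((hHx j).differentiable hr0).const_add _) (fun j y i => ?_) hmε
    simpa [T, fderiv_const_add] using hκ k hk j i x hx y
  have hT_smooth : ∀ k, ContDiffOn ℝ r (uncurry (T k)) (U ×ˢ univ) := fun k =>
    contDiffOn_pi.2 fun j =>
      ((hG k j).comp contDiffOn_fst fun _ hp => hp.1).add (hH k j).contDiffOn
  have hfixed : ∀ k x, ∃ w, κ ≤ k → x ∈ U → IsFixedPt (T k x) w := fun k x => by
    by_cases h : κ ≤ k ∧ x ∈ U
    · exact ⟨_, fun _ _ => (hT_contracting k h.1 x h.2).fixedPoint_isFixedPt⟩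
    · exact ⟨0, fun hk hx => absurd ⟨hk, hx⟩ h⟩
  choose W hW using hfixed
  have hWH : ∀ k > κ, ∀ x ∈ U, ∀ j, W k x j - G k j x = H k j x (W k x) := fun k hk x hx j => by
    rw [sub_eq_iff_eq_add', ← congrFun (hW k x hk.le hx) j]
  refine ⟨κ, 1, one_pos, fun k j x => W k x j - G k j x, fun k hk => ⟨fun j => ?_, ?_, ?_⟩⟩
  · exact (contDiffOn_pi.1 (contDiffOn_of_forall_isFixedPt_contractingWith hr0 hU (hT_smooth k)
      (hT_contracting k hk.le) (hW k · hk.le)) j).sub (hG k j)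
  · exact fun x hx j => by simp only [add_sub_cancel, hWH k hk x hx j]
  · exact fun j M hM x hx => by simpa [hWH k hk x hx j] using hM x hx _

/-- Solving the system `y_j = G_k^{(j)}(x) + H_k^{(j)}(x, y)` for large `k`,
with `C^r` solutions `y_j = G_k^{(j)}(x) + I_k^{(j)}(x)` bounded by `C · sup|H_k^{(j)}|`. -/
theorem stmt8 (n m : ℕ) (r : ℕ∞) (hr : 1 ≤ r) (U : Set (Fin n → ℝ)) (hU : IsOpen U)
    (G : ℕ → Fin m → (Fin n → ℝ) → ℝ)
    (H : ℕ → Fin m → (Fin n → ℝ) → (Fin m → ℝ) → ℝ)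
    (hG : ∀ k j, ContDiffOn ℝ r (G k j) U)
    (hH : ∀ k j, ContDiff ℝ r (fun p : (Fin n → ℝ) × (Fin m → ℝ) => H k j p.1 p.2))
    (hH0 : ∀ ε : ℝ, 0 < ε → ∃ K : ℕ, ∀ k ≥ K, ∀ j : Fin m, ∀ x ∈ U,
      ∀ y : Fin m → ℝ, |H k j x y| ≤ ε)
    (hHy : ∀ ε : ℝ, 0 < ε → ∃ K : ℕ, ∀ k ≥ K, ∀ j i : Fin m, ∀ x ∈ U,
      ∀ y : Fin m → ℝ, |fderiv ℝ (H k j x) y (Pi.single i 1)| ≤ ε) :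
    ∃ κ : ℕ, ∃ C : ℝ, 0 < C ∧ ∃ I : ℕ → Fin m → (Fin n → ℝ) → ℝ,
      ∀ k : ℕ, κ < k →
        (∀ j, ContDiffOn ℝ r (I k j) U) ∧
        (∀ x ∈ U, ∀ j : Fin m,
          G k j x + I k j x = G k j x + H k j x (fun j' => G k j' x + I k j' x)) ∧
        (∀ j : Fin m, ∀ M : ℝ,
          (∀ x ∈ U, ∀ y : Fin m → ℝ, |H k j x y| ≤ M) →
          ∀ x ∈ U, |I k j x| ≤ C * M) :=
  stmt8_general n m r hr U hU G H hG hH hHy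
end
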